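/- Let K = ℚ(√3) and let I = ⟨1 - √3⟩ be the principal ideal of O_K = ℤ[√3] generated by 1 - √3. Then the lattice Λ_K(I) = σ(I) ⊂ ℝ² is well-rounded with exactly 6 minimal vectors, namely S(Λ_K(I)) = { ±(2,2), ±(1+√3, 1-√3), ±(1-√3, 1+√3) }, and Λ_K(I) is similar to the hexagonal lattice Λ_h. -/

import Mathlib

open NumberField

/-- The minimum `|Λ|` of a planar lattice `Λ = S ⊆ ℝ²`: the infimum of squared
Euclidean norms of nonzero points. -/
noncomputable def pMin (S : Set (EuclideanSpace ℝ (Fin 2))) : ℝ :=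
  sInf {r : ℝ | ∃ x ∈ S, x ≠ 0 ∧ ‖x‖ ^ 2 = r}

/-- The set of minimal vectors `S(Λ)` of a planar lattice. -/
def pMinVecs (S : Set (EuclideanSpace ℝ (Fin 2))) : Set (EuclideanSpace ℝ (Fin 2)) :=
  {x ∈ S | ‖x‖ ^ 2 = pMin S}

/-- A planar lattice is well-rounded if its minimal vectors span `ℝ²`. -/
def pIsWellRounded (S : Set (EuclideanSpace ℝ (Fin 2))) : Prop :=
  Submodule.span ℝ (pMinVecs S) = ⊤

/-- Two subsets of `ℝ²` are similar if one is obtained from the other by applying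
an orthogonal transformation and multiplying by a nonzero scalar. -/
def pSimilar (S T : Set (EuclideanSpace ℝ (Fin 2))) : Prop :=
  ∃ (α : ℝ) (f : EuclideanSpace ℝ (Fin 2) ≃ₗᵢ[ℝ] EuclideanSpace ℝ (Fin 2)),
    α ≠ 0 ∧ T = (fun x => α • f x) '' S

/-- The vector `(a, b)` in `ℝ²` with its Euclidean structure. -/
noncomputable def vec2 (a b : ℝ) : EuclideanSpace ℝ (Fin 2) :=
  (WithLp.equiv 2 (Fin 2 → ℝ)).symm ![a, b]

/-- The hexagonal lattice, spanned over `ℤ` by `(1,0)` and `(1/2, √3/2)`. -/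
noncomputable def hexLattice : Submodule ℤ (EuclideanSpace ℝ (Fin 2)) :=
  Submodule.span ℤ {vec2 1 0, vec2 (1/2) (Real.sqrt 3 / 2)}

/-!
Write `x = p + q √3`. The trace `2p` and the norm `p² - 3q²` of an algebraic integer are rational
integers, which forces `p, q ∈ ℤ`; so `𝓞 K = ℤ[√3]` and `σ` maps `I = (1 - √3)` onto the
`ℤ`-span of `u = σ(2) = (2, 2)` and `v = σ(1 - √3) = (1 - √3, 1 + √3)`. These have equal length
and `2 ⟪u, v⟫ = ‖u‖²`, so `‖a u + b v‖² = ‖u‖² (a² + a b + b²)`: the Eisenstein norm form, which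
is `≥ 1` on nonzero pairs and `= 1` exactly at the six units. Finally, identifying `ℝ²` with `ℂ`,
multiplication by `(1 - i) / 4` sends `u ↦ 1` and `v ↦ e^{iπ/3}`.
-/

local notation "ℝ²" => EuclideanSpace ℝ (Fin 2)

section Vec2

@[simp] lemma vec2_apply_zero (a b : ℝ) : vec2 a b 0 = a := rfl

@[simp] lemma vec2_apply_one (a b : ℝ) : vec2 a b 1 = b := rfl

lemma vec2_eta (x : ℝ²) : vec2 (x 0) (x 1) = x :=
  PiLp.ext fun i => by fin_cases i <;> rfl

lemma vec2_inj {a b c d : ℝ} : vec2 a b = vec2 c d ↔ a = c ∧ b = d := by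
  refine ⟨fun h => ⟨congrArg (· 0) h, congrArg (· 1) h⟩, ?_⟩
  rintro ⟨rfl, rfl⟩
  rfl

lemma vec2_add_vec2 (a b c d : ℝ) : vec2 a b + vec2 c d = vec2 (a + c) (b + d) := by
  rw [← vec2_eta (vec2 a b + _)]; rfl

lemma vec2_sub_vec2 (a b c d : ℝ) : vec2 a b - vec2 c d = vec2 (a - c) (b - d) := by
  rw [← vec2_eta (vec2 a b - _)]; rfl

lemma smul_vec2 (r a b : ℝ) : r • vec2 a b = vec2 (r * a) (r * b) := by
  rw [← vec2_eta (r • vec2 a b)]; rfl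

lemma zsmul_vec2 (n : ℤ) (a b : ℝ) : n • vec2 a b = vec2 (n * a) (n * b) := by
  rw [← Int.cast_smul_eq_zsmul ℝ, smul_vec2]

lemma norm_vec2_sq (a b : ℝ) : ‖vec2 a b‖ ^ 2 = a ^ 2 + b ^ 2 := by
  simp [EuclideanSpace.norm_sq_eq, Fin.sum_univ_two]

lemma inner_vec2 (a b c d : ℝ) : inner ℝ (vec2 a b) (vec2 c d) = a * c + b * d := by
  simp [PiLp.inner_apply, Fin.sum_univ_two, mul_comm]

end Vec2

section HexagonalBasis

variable {E : Type*} [NormedAddCommGroup E] [InnerProductSpace ℝ E]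

/-- `u` and `v` have equal length and enclose the angle `π / 3`. -/
structure IsHexagonalBasis (u v : E) : Prop where
  ne_zero : u ≠ 0
  norm_sq_eq : ‖v‖ ^ 2 = ‖u‖ ^ 2
  two_mul_inner_eq : 2 * inner ℝ u v = ‖u‖ ^ 2

namespace IsHexagonalBasis

variable {u v : E}

lemma norm_smul_add_smul_sq (h : IsHexagonalBasis u v) (s t : ℝ) :
    ‖s • u + t • v‖ ^ 2 = ‖u‖ ^ 2 * (s ^ 2 + s * t + t ^ 2) := by
  rw [norm_add_sq_real, norm_smul, norm_smul, inner_smul_left, inner_smul_right, mul_pow,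
    mul_pow, h.norm_sq_eq, Real.norm_eq_abs, Real.norm_eq_abs, sq_abs, sq_abs, conj_trivial]
  linear_combination s * t * h.two_mul_inner_eq

lemma norm_zsmul_add_zsmul_sq (h : IsHexagonalBasis u v) (a b : ℤ) :
    ‖a • u + b • v‖ ^ 2 = ‖u‖ ^ 2 * ((a ^ 2 + a * b + b ^ 2 : ℤ) : ℝ) := by
  rw [← Int.cast_smul_eq_zsmul ℝ, ← Int.cast_smul_eq_zsmul ℝ, h.norm_smul_add_smul_sq]
  push_cast
  ring

lemma linearIndependent (h : IsHexagonalBasis u v) : LinearIndependent ℝ ![u, v] := by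
  refine LinearIndependent.pair_iff.mpr fun s t hst => ?_
  have hu : 0 < ‖u‖ ^ 2 := by have := h.ne_zero; positivity
  have hform : s ^ 2 + s * t + t ^ 2 = 0 := by
    have := h.norm_smul_add_smul_sq s t
    rw [hst, norm_zero, zero_pow two_ne_zero] at this
    exact (mul_eq_zero.mp this.symm).resolve_left hu.ne'
  constructor <;> nlinarith [sq_nonneg (s + t), sq_nonneg s, sq_nonneg t]

end IsHexagonalBasis

end HexagonalBasis

/-- The coordinates `(a, b)` of the six units `a + b ζ` of `ℤ[ζ]`, `ζ = e^{iπ/3}`. -/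
def eisensteinUnitCoords : Finset (ℤ × ℤ) := {(1, 0), (-1, 0), (1, -1), (-1, 1), (0, 1), (0, -1)}

lemma Int.one_le_sq_add_mul_add_sq {a b : ℤ} (h : (a, b) ≠ 0) : 1 ≤ a ^ 2 + a * b + b ^ 2 := by
  have hab : b ≠ 0 ∨ a ≠ 0 := by
    by_contra! hab
    exact h (by simp [hab.1, hab.2])
  rcases hab with hb | ha
  · have : 0 < b ^ 2 := by positivity
    nlinarith [sq_nonneg (2 * a + b)]
  · have : 0 < a ^ 2 := by positivity
    nlinarith [sq_nonneg (a + 2 * b)]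

lemma Int.sq_add_mul_add_sq_eq_one_iff {a b : ℤ} :
    a ^ 2 + a * b + b ^ 2 = 1 ↔ (a, b) ∈ eisensteinUnitCoords := by
  constructor
  · intro h
    obtain ⟨_, _⟩ : -1 ≤ b ∧ b ≤ 1 := by constructor <;> nlinarith [sq_nonneg (2 * a + b)]
    obtain ⟨_, _⟩ : -1 ≤ a ∧ a ≤ 1 := by constructor <;> nlinarith [sq_nonneg (a + 2 * b)]
    interval_cases a <;> interval_cases b <;> simp_all [eisensteinUnitCoords]
  · intro h
    fin_cases h <;> norm_num

namespace IsHexagonalBasis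

variable {u v : ℝ²}

lemma pMin_span (h : IsHexagonalBasis u v) :
    pMin (Submodule.span ℤ {u, v} : Set ℝ²) = ‖u‖ ^ 2 := by
  refine IsLeast.csInf_eq ⟨⟨u, Submodule.subset_span (by simp), h.ne_zero, rfl⟩, ?_⟩
  rintro r ⟨x, hx, hx0, rfl⟩
  obtain ⟨a, b, rfl⟩ := Submodule.mem_span_pair.mp hx
  have hab : (a, b) ≠ 0 := by
    rintro ⟨⟩
    simp at hx0
  have : (1 : ℝ) ≤ ((a ^ 2 + a * b + b ^ 2 : ℤ) : ℝ) := by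
    exact_mod_cast Int.one_le_sq_add_mul_add_sq hab
  rw [h.norm_zsmul_add_zsmul_sq]
  nlinarith [sq_nonneg ‖u‖]

lemma pMinVecs_span (h : IsHexagonalBasis u v) :
    pMinVecs (Submodule.span ℤ {u, v} : Set ℝ²) =
      (fun p : ℤ × ℤ => p.1 • u + p.2 • v) '' eisensteinUnitCoords := by
  have hu : ‖u‖ ^ 2 ≠ 0 := by have := h.ne_zero; positivity
  ext x
  simp only [pMinVecs, h.pMin_span, SetLike.mem_coe, Submodule.mem_span_pair,
    Set.mem_image, Prod.exists, ← Int.sq_add_mul_add_sq_eq_one_iff]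
  constructor
  · rintro ⟨⟨a, b, rfl⟩, hn⟩
    refine ⟨a, b, ?_, rfl⟩
    rw [h.norm_zsmul_add_zsmul_sq, mul_eq_left₀ hu] at hn
    exact_mod_cast hn
  · rintro ⟨a, b, hab, rfl⟩
    refine ⟨⟨a, b, rfl⟩, ?_⟩
    rw [h.norm_zsmul_add_zsmul_sq, hab, Int.cast_one, mul_one]

lemma pIsWellRounded_span (h : IsHexagonalBasis u v) :
    pIsWellRounded (Submodule.span ℤ {u, v} : Set ℝ²) := by
  have hspan : Submodule.span ℝ {u, v} = ⊤ := by
    rw [← Matrix.range_cons_cons_empty u v ![]]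
    exact h.linearIndependent.span_eq_top_of_card_eq_finrank' (by simp)
  refine eq_top_iff.mpr (hspan ▸ Submodule.span_le.mpr ?_)
  rw [Set.pair_subset_iff, SetLike.mem_coe, SetLike.mem_coe, h.pMinVecs_span]
  exact ⟨Submodule.subset_span ⟨(1, 0), by simp [eisensteinUnitCoords], by simp⟩,
    Submodule.subset_span ⟨(0, 1), by simp [eisensteinUnitCoords], by simp⟩⟩

lemma ncard_pMinVecs_span (h : IsHexagonalBasis u v) :
    (pMinVecs (Submodule.span ℤ {u, v} : Set ℝ²)).ncard = 6 := by
  have hinj : Function.Injective fun p : ℤ × ℤ => p.1 • u + p.2 • v := by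
    intro p q hpq
    have hli := LinearIndependent.pair_iff.mp (h.linearIndependent.restrict_scalars' ℤ)
      (p.1 - q.1) (p.2 - q.2) (by linear_combination (norm := module) hpq)
    ext <;> linarith [hli.1, hli.2]
  rw [h.pMinVecs_span, Set.ncard_image_of_injective _ hinj, Set.ncard_coe_finset]
  rfl

end IsHexagonalBasis

/-- Multiplication by `w` on `ℂ`, transported to `ℝ²` along `(x, y) ↦ x + y i`. -/
noncomputable def complexMul (w : ℂ) : ℝ² →ₗ[ℝ] ℝ² :=
  Complex.orthonormalBasisOneI.repr.toLinearMap ∘ₗ LinearMap.mulLeft ℝ w ∘ₗ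
    Complex.orthonormalBasisOneI.repr.symm.toLinearMap

lemma complexMul_vec2 (w : ℂ) (a b : ℝ) :
    complexMul w (vec2 a b) = vec2 (w.re * a - w.im * b) (w.im * a + w.re * b) := by
  rw [← vec2_eta (complexMul w _), vec2_inj]
  simp [complexMul, Complex.orthonormalBasisOneI_repr_symm_apply,
    Complex.orthonormalBasisOneI_repr_apply, add_comm]

lemma pSimilar_image_complexMul (S : Set ℝ²) {w : ℂ} (hw : w ≠ 0) :
    pSimilar S (complexMul w '' S) := by
  set e := Complex.orthonormalBasisOneI.repr
  have hnorm : ‖w‖ ≠ 0 := norm_ne_zero_iff.mpr hw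
  let c : Circle := ⟨w / ‖w‖, by simp [Submonoid.unitSphere, hnorm]⟩
  have hc : (‖w‖ : ℂ) * c = w := mul_div_cancel₀ _ (Complex.ofReal_ne_zero.mpr hnorm)
  refine ⟨‖w‖, e.symm.trans ((rotation c).trans e), hnorm,
    congrArg (· '' S) (funext fun x => ?_)⟩
  simp only [complexMul, LinearIsometryEquiv.trans_apply, rotation_apply, ← e.map_smul,
    Complex.real_smul, ← mul_assoc, hc]
  rfl

lemma pSimilar_span_pair_complexMul (u v : ℝ²) {w : ℂ} (hw : w ≠ 0) :
    pSimilar (Submodule.span ℤ {u, v} : Set ℝ²)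
      (Submodule.span ℤ {complexMul w u, complexMul w v} : Set ℝ²) := by
  rw [← Set.image_pair, ← LinearMap.coe_restrictScalars ℤ, ← Submodule.map_span,
    Submodule.map_coe]
  exact pSimilar_image_complexMul _ hw

lemma Int.even_and_even_of_sq_sub_three_mul_sq_eq {m w n : ℤ}
    (h : m ^ 2 - 3 * w ^ 2 = 4 * n) : Even m ∧ Even w := by
  rcases Int.even_or_odd' m with ⟨s, rfl | rfl⟩ <;>
    rcases Int.even_or_odd' w with ⟨t, rfl | rfl⟩ <;> ring_nf at h
  exacts [⟨even_two_mul s, even_two_mul t⟩, by omega, by omega, by omega]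

lemma Rat.exists_intCast_eq_of_sq_eq_intCast {r : ℚ} {n : ℤ} (h : r ^ 2 = n) :
    ∃ k : ℤ, (k : ℚ) = r := by
  have hden : r.den ^ 2 = 1 := by rw [← Rat.den_pow, h, Rat.den_intCast]
  exact ⟨r.num, Rat.coe_int_num_of_den_eq_one (by simpa using hden)⟩

lemma Rat.exists_intCast_eq_of_isIntegral {r : ℚ} (h : IsIntegral ℤ (r : ℝ)) :
    ∃ k : ℤ, (k : ℚ) = r :=
  IsIntegrallyClosed.isIntegral_iff.mp <|
    (isIntegral_algebraMap_iff (algebraMap ℚ ℝ).injective).mp h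

lemma Rat.exists_intCast_eq_of_two_mul_of_sq_sub_three_mul_sq {p q : ℚ} {m n : ℤ}
    (hm : (m : ℚ) = 2 * p) (hn : (n : ℚ) = p ^ 2 - 3 * q ^ 2) :
    ∃ a b : ℤ, (a : ℚ) = p ∧ (b : ℚ) = q := by
  obtain ⟨k, hk⟩ := Rat.exists_intCast_eq_of_sq_eq_intCast (r := 6 * q)
    (n := 3 * (m ^ 2 - 4 * n)) (by push_cast; rw [hm, hn]; ring)
  have hk2 : k ^ 2 = 3 * (m ^ 2 - 4 * n) := by
    have : (k : ℚ) ^ 2 = 3 * ((m : ℚ) ^ 2 - 4 * n) := by rw [hk, hm, hn]; ring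
    exact_mod_cast this
  obtain ⟨w, rfl⟩ := Int.prime_three.dvd_of_dvd_pow ⟨_, hk2⟩
  have hw : (w : ℚ) = 2 * q := by push_cast at hk; linarith
  have hmw : m ^ 2 - 3 * w ^ 2 = 4 * n := by
    have : (m : ℚ) ^ 2 - 3 * (w : ℚ) ^ 2 = 4 * n := by rw [hm, hn, hw]; ring
    exact_mod_cast this
  obtain ⟨⟨a, rfl⟩, ⟨b, rfl⟩⟩ := Int.even_and_even_of_sq_sub_three_mul_sq_eq hmw
  push_cast at hm hw
  exact ⟨a, b, by linarith, by linarith⟩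

lemma Rat.eq_zero_of_add_mul_sqrt_three_eq_zero {s t : ℚ} (h : (s : ℝ) + t * √3 = 0) :
    s = 0 ∧ t = 0 := by
  have ht : t = 0 := by
    by_contra ht
    refine Nat.prime_three.irrational_sqrt ⟨-s / t, ?_⟩
    push_cast
    field_simp
    linarith
  subst ht
  simpa using h

lemma RingHom.map_eq_sqrt_three_or_neg {R : Type*} [Ring R] (σ : R →+* ℝ) {α : R}
    (hα : α ^ 2 = 3) : σ α = √3 ∨ σ α = -√3 :=
  sq_eq_sq_iff_eq_or_eq_neg.mp <| by rw [← map_pow, hα, map_ofNat, Real.sq_sqrt (by norm_num)]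

lemma RingHom.map_intCast_add_mul_mul_one_sub {R : Type*} [Ring R] (σ : R →+* ℝ) {α : R}
    (hα : σ α ^ 2 = 3) (p q : ℤ) :
    σ ((p + q * α) * (1 - α)) = 2 * (-q : ℤ) + (p - q : ℤ) * (1 - σ α) := by
  simp only [map_mul, map_add, map_sub, map_one, map_intCast]
  push_cast
  linear_combination (-q : ℝ) * hα

section RationalStructure

variable {K : Type*} [Field K] [CharZero K] {α : K}

lemma exists_eq_ratCast_add_ratCast_mul (hdeg : Module.finrank ℚ K = 2) {σ : K →+* ℝ}
    (hσ : σ α = √3) (x : K) : ∃ p q : ℚ, x = p + q * α := by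
  have hli : LinearIndependent ℚ ![1, α] := LinearIndependent.pair_iff.mpr fun s t hst => by
    apply Rat.eq_zero_of_add_mul_sqrt_three_eq_zero
    simpa [Rat.smul_def, hσ] using congrArg σ hst
  have : FiniteDimensional ℚ K := Module.finite_of_finrank_eq_succ hdeg
  have hspan := hli.span_eq_top_of_card_eq_finrank' (by simp [hdeg])
  rw [Matrix.range_cons_cons_empty] at hspan
  obtain ⟨p, q, hpq⟩ := Submodule.mem_span_pair.mp (hspan ▸ Submodule.mem_top : x ∈ _)
  exact ⟨p, q, by simpa [Rat.smul_def] using hpq.symm⟩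

lemma map_eq_neg_sqrt_three (hdeg : Module.finrank ℚ K = 2) (hα : α ^ 2 = 3)
    {σ₁ σ₂ : K →+* ℝ} (hne : σ₁ ≠ σ₂) (hσ₁ : σ₁ α = √3) : σ₂ α = -√3 := by
  refine (σ₂.map_eq_sqrt_three_or_neg hα).resolve_left fun hσ₂ => hne (RingHom.ext fun x => ?_)
  obtain ⟨p, q, rfl⟩ := exists_eq_ratCast_add_ratCast_mul hdeg hσ₁ x
  simp [hσ₁, hσ₂]

lemma exists_algebraMap_eq_intCast_add_intCast_mul (hdeg : Module.finrank ℚ K = 2)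
    {σ₁ σ₂ : K →+* ℝ} (hσ₁ : σ₁ α = √3) (hσ₂ : σ₂ α = -√3) (γ : 𝓞 K) :
    ∃ a b : ℤ, algebraMap (𝓞 K) K γ = a + b * α := by
  set x := algebraMap (𝓞 K) K γ
  obtain ⟨p, q, hpq⟩ := exists_eq_ratCast_add_ratCast_mul hdeg hσ₁ x
  have hint (σ : K →+* ℝ) : IsIntegral ℤ (σ x) :=
    (RingOfIntegers.isIntegral_coe γ).map σ.toIntAlgHom
  have htrace : ((2 * p : ℚ) : ℝ) = σ₁ x + σ₂ x := by
    simp only [hpq, map_add, map_mul, map_ratCast, hσ₁, hσ₂]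
    push_cast
    ring
  have hnorm : ((p ^ 2 - 3 * q ^ 2 : ℚ) : ℝ) = σ₁ x * σ₂ x := by
    simp only [hpq, map_add, map_mul, map_ratCast, hσ₁, hσ₂]
    push_cast
    linear_combination (q : ℝ) ^ 2 * Real.sq_sqrt (show (0 : ℝ) ≤ 3 by norm_num)
  obtain ⟨m, hm⟩ := Rat.exists_intCast_eq_of_isIntegral (htrace ▸ (hint σ₁).add (hint σ₂))
  obtain ⟨n, hn⟩ := Rat.exists_intCast_eq_of_isIntegral (hnorm ▸ (hint σ₁).mul (hint σ₂))
  obtain ⟨a, b, rfl, rfl⟩ := Rat.exists_intCast_eq_of_two_mul_of_sq_sub_three_mul_sq hm hn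
  exact ⟨a, b, by simpa using hpq⟩

end RationalStructure

section IdealLattice

variable {K : Type*} [Field K] {α : K} {σ₁ σ₂ : K →+* ℝ}

lemma vec2_map_intCast_add_mul_mul_one_sub (hσ₁ : σ₁ α = √3) (hσ₂ : σ₂ α = -√3) (p q : ℤ) :
    vec2 (σ₁ ((p + q * α) * (1 - α))) (σ₂ ((p + q * α) * (1 - α))) =
      (-q) • vec2 2 2 + (p - q) • vec2 (1 - √3) (1 + √3) := by
  have h3 : √3 ^ 2 = 3 := Real.sq_sqrt (by norm_num)
  rw [σ₁.map_intCast_add_mul_mul_one_sub (by rw [hσ₁, h3]),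
    σ₂.map_intCast_add_mul_mul_one_sub (by rw [hσ₂, neg_sq, h3]), hσ₁, hσ₂, zsmul_vec2,
    zsmul_vec2, vec2_add_vec2, sub_neg_eq_add]
  congr 1 <;> ring

lemma image_span_one_sub_eq_span (hσ₁ : σ₁ α = √3) (hσ₂ : σ₂ α = -√3)
    (hO : ∀ γ : 𝓞 K, ∃ a b : ℤ, algebraMap (𝓞 K) K γ = a + b * α)
    {β : 𝓞 K} (hβ : algebraMap (𝓞 K) K β = α) :
    (fun x : K => vec2 (σ₁ x) (σ₂ x)) ''
        (algebraMap (𝓞 K) K '' ((Ideal.span {1 - β} : Ideal (𝓞 K)) : Set (𝓞 K))) =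
      Submodule.span ℤ {vec2 2 2, vec2 (1 - √3) (1 + √3)} := by
  ext y
  rw [SetLike.mem_coe, Submodule.mem_span_pair]
  constructor
  · rintro ⟨_, ⟨_, hγ, rfl⟩, rfl⟩
    obtain ⟨δ, rfl⟩ := Ideal.mem_span_singleton'.mp hγ
    obtain ⟨p, q, hδ⟩ := hO δ
    refine ⟨-q, p - q, ?_⟩
    rw [← vec2_map_intCast_add_mul_mul_one_sub hσ₁ hσ₂, ← hδ, ← hβ,
      ← map_one (algebraMap (𝓞 K) K), ← map_sub, ← map_mul]
  · rintro ⟨a, b, rfl⟩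
    refine ⟨_, ⟨((b - a : ℤ) + (-a : ℤ) * β) * (1 - β),
      Ideal.mul_mem_left _ _ (Ideal.mem_span_singleton_self _), rfl⟩, ?_⟩
    have hx : algebraMap (𝓞 K) K (((b - a : ℤ) + (-a : ℤ) * β) * (1 - β)) =
        ((b - a : ℤ) + (-a : ℤ) * α) * (1 - α) := by
      simp only [map_mul, map_add, map_sub, map_one, map_intCast, hβ]
    rw [hx]
    refine (vec2_map_intCast_add_mul_mul_one_sub hσ₁ hσ₂ _ _).trans ?_
    congr 2 <;> ring

end IdealLattice

lemma isHexagonalBasis_sqrtThree : IsHexagonalBasis (vec2 2 2) (vec2 (1 - √3) (1 + √3)) := by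
  have h3 : √3 ^ 2 = 3 := Real.sq_sqrt (by norm_num)
  refine ⟨fun h => by simpa using congrArg (· 0) h, ?_, ?_⟩
  · rw [norm_vec2_sq, norm_vec2_sq]
    linear_combination 2 * h3
  · rw [inner_vec2, norm_vec2_sq]
    ring

lemma pMinVecs_span_sqrtThree :
    pMinVecs (Submodule.span ℤ {vec2 2 2, vec2 (1 - √3) (1 + √3)} : Set ℝ²) =
      {vec2 2 2, -vec2 2 2, vec2 (1 + √3) (1 - √3), -vec2 (1 + √3) (1 - √3),
        vec2 (1 - √3) (1 + √3), -vec2 (1 - √3) (1 + √3)} := by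
  have hsub : vec2 2 2 - vec2 (1 - √3) (1 + √3) = vec2 (1 + √3) (1 - √3) := by
    rw [vec2_sub_vec2]
    congr 1 <;> ring
  rw [isHexagonalBasis_sqrtThree.pMinVecs_span]
  simp only [eisensteinUnitCoords, Finset.coe_insert, Finset.coe_singleton, Set.image_insert_eq,
    Set.image_singleton, one_smul, zero_smul, neg_smul, add_zero, zero_add]
  rw [← sub_eq_add_neg, neg_add_eq_sub, ← neg_sub (vec2 2 2), hsub]

lemma pSimilar_span_sqrtThree_hexLattice :
    pSimilar (Submodule.span ℤ {vec2 2 2, vec2 (1 - √3) (1 + √3)} : Set ℝ²) hexLattice := by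
  set w : ℂ := ⟨1 / 4, -1 / 4⟩
  have hw : w ≠ 0 := fun h => by simpa [w] using congrArg Complex.re h
  have hu : complexMul w (vec2 2 2) = vec2 1 0 := by
    rw [complexMul_vec2, vec2_inj]
    norm_num [w]
  have hv : complexMul w (vec2 (1 - √3) (1 + √3)) = vec2 (1 / 2) (√3 / 2) := by
    rw [complexMul_vec2, vec2_inj]
    constructor <;> ring
  rw [hexLattice, ← hu, ← hv]
  exact pSimilar_span_pair_complexMul _ _ hw

/-- Let `K = ℚ(√3)` and `I = ⟨1 - √3⟩ ⊆ O_K = ℤ[√3]`. Then the lattice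
`Λ_K(I) = σ(I) ⊂ ℝ²` is well-rounded with exactly the 6 minimal vectors
`±(2,2)`, `±(1+√3, 1-√3)`, `±(1-√3, 1+√3)`, and `Λ_K(I)` is similar to the
hexagonal lattice. -/
theorem statement17 (K : Type*) [Field K] [NumberField K]
    (hdeg : Module.finrank ℚ K = 2) (α : K) (hα : α ^ 2 = 3)
    (σ₁ σ₂ : K →+* ℝ) (hne : σ₁ ≠ σ₂) (hσ₁ : σ₁ α = Real.sqrt 3)
    (β : 𝓞 K) (hβ : algebraMap (𝓞 K) K β = α) :
    pIsWellRounded ((fun x : K => vec2 (σ₁ x) (σ₂ x)) ''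
        (algebraMap (𝓞 K) K '' ((Ideal.span {1 - β} : Ideal (𝓞 K)) : Set (𝓞 K)))) ∧
    pMinVecs ((fun x : K => vec2 (σ₁ x) (σ₂ x)) ''
        (algebraMap (𝓞 K) K '' ((Ideal.span {1 - β} : Ideal (𝓞 K)) : Set (𝓞 K)))) =
      {vec2 2 2, -vec2 2 2,
        vec2 (1 + Real.sqrt 3) (1 - Real.sqrt 3),
        -vec2 (1 + Real.sqrt 3) (1 - Real.sqrt 3),
        vec2 (1 - Real.sqrt 3) (1 + Real.sqrt 3),
        -vec2 (1 - Real.sqrt 3) (1 + Real.sqrt 3)} ∧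
    (pMinVecs ((fun x : K => vec2 (σ₁ x) (σ₂ x)) ''
        (algebraMap (𝓞 K) K ''
          ((Ideal.span {1 - β} : Ideal (𝓞 K)) : Set (𝓞 K))))).ncard = 6 ∧
    pSimilar ((fun x : K => vec2 (σ₁ x) (σ₂ x)) ''
        (algebraMap (𝓞 K) K '' ((Ideal.span {1 - β} : Ideal (𝓞 K)) : Set (𝓞 K))))
      (hexLattice : Set (EuclideanSpace ℝ (Fin 2))) := by
  have hσ₂ : σ₂ α = -√3 := map_eq_neg_sqrt_three hdeg hα hne hσ₁
  have hO := exists_algebraMap_eq_intCast_add_intCast_mul hdeg hσ₁ hσ₂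
  rw [image_span_one_sub_eq_span hσ₁ hσ₂ hO hβ]
  exact ⟨isHexagonalBasis_sqrtThree.pIsWellRounded_span, pMinVecs_span_sqrtThree,
    isHexagonalBasis_sqrtThree.ncard_pMinVecs_span, pSimilar_span_sqrtThree_hexLattice⟩
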